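/- arXiv:2112.15048 — 5 statements merged into one kernel-verified Lean document; each statement's English description precedes it below -/
import Mathlib

section
/- Let K be a field of characteristic 2 and let a, b ∈ ℤ with a ≡ b (mod 2). Then for every u ∈ (U_1)_a and every v ∈ (U_1)_b one has ⁅u, v⁆ = 0. (The graded identities ⁅x_1^a, x_2^b⁆, with a and b of the same parity, hold in U_1.) -/
open LaurentPolynomial

variable (K : Type*) [Field K]

/-- `U_1`, the Lie algebra of `K`-linear derivations of `K[t, t⁻¹]`. -/
abbrev U1 (K : Type*) [Field K] := Derivation K (LaurentPolynomial K) (LaurentPolynomial K)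

/-- Evaluation of a derivation of `K[t,t⁻¹]` at `t`, as a linear map. -/
noncomputable def evalT : U1 K →ₗ[K] LaurentPolynomial K where
  toFun D := D (T 1)
  map_add' D E := by simp
  map_smul' c D := by simp

/-- The homogeneous component `(U_1)_a = {D | D t ∈ K • t^{a+1}}` of the canonical
ℤ-grading of `U_1`. -/
noncomputable def U1comp (a : ℤ) : Submodule K (U1 K) :=
  (Submodule.span K ({T (a + 1)} : Set (LaurentPolynomial K))).comap (evalT K)

/-!
A derivation `D` of `K[t, t⁻¹]` is determined by `D t`, because `D (t ^ n) = n t ^ (n - 1) D t`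
for all `n : ℤ`. If `u t = c t ^ (a + 1)` and `v t = d t ^ (b + 1)`, this gives
`⁅u, v⁆ t = (b - a) c d t ^ (a + b + 1)`, and `b - a` is even, hence zero in characteristic two.
-/

namespace LaurentPolynomial

section Derivation

variable {R M : Type*} [CommSemiring R] [AddCommGroup M] [Module R[T;T⁻¹] M] [Module R M]

theorem derivation_T (D : Derivation R R[T;T⁻¹] M) (n : ℤ) :
    D (T n) = n • (T (n - 1) : R[T;T⁻¹]) • D (T 1) := by
  -- `n ↦ t^(1-n) D(t^n)` is additive in `n` by the Leibniz rule
  let logDeriv : ℤ →+ M :=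
    AddMonoidHom.mk' (fun n ↦ (T (1 - n) : R[T;T⁻¹]) • D (T n)) fun m n ↦ by
      rw [T_add, D.leibniz, smul_add, smul_smul, smul_smul, ← T_add, ← T_add, add_comm]
      congr 2 <;> congr 1 <;> ring
  have h := map_zsmul logDeriv n 1
  simp only [logDeriv, AddMonoidHom.mk'_apply, zsmul_one, Int.cast_id, sub_self, T_zero,
    one_smul] at h
  rw [← smul_comm, ← h, smul_smul, ← T_add]
  simp

theorem derivation_ext {D₁ D₂ : Derivation R R[T;T⁻¹] M} (h : D₁ (T 1) = D₂ (T 1)) :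
    D₁ = D₂ := by
  ext p
  induction p using LaurentPolynomial.induction_on' with
  | add p q hp hq => rw [map_add, map_add, hp, hq]
  | C_mul_T n r => rw [← smul_eq_C_mul, D₁.map_smul, D₂.map_smul, derivation_T D₁ n,
      derivation_T D₂ n, h]

end Derivation

section Bracket

variable {R : Type*} [CommRing R]

theorem derivation_bracket_apply_T_one {D₁ D₂ : Derivation R R[T;T⁻¹] R[T;T⁻¹]} {a b : ℤ}
    {c d : R} (h₁ : D₁ (T 1) = c • T (a + 1)) (h₂ : D₂ (T 1) = d • T (b + 1)) :
    ⁅D₁, D₂⁆ (T 1) = ((b - a : ℤ) * c * d) • T (a + b + 1) := by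
  rw [Derivation.commutator_apply, h₁, h₂, D₁.map_smul, D₂.map_smul, derivation_T D₁,
    derivation_T D₂, h₁, h₂]
  simp only [add_sub_cancel_right, T_add, smul_eq_C_mul, zsmul_eq_mul, map_mul, map_intCast]
  push_cast
  ring

end Bracket

end LaurentPolynomial

theorem mem_U1comp_iff {a : ℤ} {u : U1 K} :
    u ∈ U1comp K a ↔ ∃ c : K, u (T 1) = c • T (a + 1) := by
  simp only [U1comp, Submodule.mem_comap, Submodule.mem_span_singleton, eq_comm]
  rfl

/-- Lemma 3.1: in characteristic two, `⁅u, v⁆ = 0` whenever `u ∈ (U_1)_a`, `v ∈ (U_1)_b`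
with `a ≡ b (mod 2)`. -/
theorem bracket_eq_zero_of_sameParity [CharP K 2] (a b : ℤ) (hab : a ≡ b [ZMOD 2])
    (u v : U1 K) (hu : u ∈ U1comp K a) (hv : v ∈ U1comp K b) :
    ⁅u, v⁆ = 0 := by
  obtain ⟨c, hc⟩ := (mem_U1comp_iff K).1 hu
  obtain ⟨d, hd⟩ := (mem_U1comp_iff K).1 hv
  have hba : ((b - a : ℤ) : K) = 0 := (CharP.intCast_eq_zero_iff K 2 _).2 hab.dvd
  apply derivation_ext
  rw [derivation_bracket_apply_T_one hc hd, hba, zero_mul, zero_mul, zero_smul,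
    Derivation.zero_apply]
end

section
/- Let K be a field of characteristic 2. Every left-normed monomial M = ⁅x_{i_1}^{a_1}, x_{i_2}^{a_2}, …, x_{i_n}^{a_n}⁆ (n ≥ 1) that is a ℤ-graded identity of U_1 belongs to ⟨S⟩_{T_ℤ}, where S = {⁅x_1^a, x_2^b⁆ : a, b ∈ ℤ, a ≡ b (mod 2)}. (Every graded monomial identity of U_1 is a consequence of the identities ⁅x_1^a, x_2^b⁆ with a ≡ b (mod 2).) -/
open FreeLieAlgebra LaurentPolynomial

/-- The free Lie algebra `L` over `K` on the generators `x_i^a`, `(a, i) : ℤ × ℕ`;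
the generator `x_i^a := FreeLieAlgebra.of K (a, i)` has ℤ-degree `a`. -/
abbrev FL (K : Type*) [Field K] := FreeLieAlgebra K (ℤ × ℕ)

variable (K : Type*) [Field K]

/-- Iterated Lie brackets of generators whose ℤ-degrees sum to `a`. -/
inductive IsHomBracket : FL K → ℤ → Prop
  | gen (a : ℤ) (i : ℕ) : IsHomBracket (FreeLieAlgebra.of K (a, i)) a
  | bracket {u v : FL K} {a b : ℤ} :
      IsHomBracket u a → IsHomBracket v b → IsHomBracket ⁅u, v⁆ (a + b)

/-- The homogeneous component `L_a` of the free Lie algebra. -/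
noncomputable def homComp (a : ℤ) : Submodule K (FL K) :=
  Submodule.span K {w : FL K | IsHomBracket K w a}

/-- A graded endomorphism of the free Lie algebra. -/
def IsGradedEndo (φ : FL K →ₗ⁅K⁆ FL K) : Prop :=
  ∀ (a : ℤ) (i : ℕ), φ (FreeLieAlgebra.of K (a, i)) ∈ homComp K a

/-- A `T_ℤ`-ideal: a Lie ideal stable under all graded endomorphisms. -/
def IsTIdeal (I : LieIdeal K (FL K)) : Prop :=
  ∀ φ : FL K →ₗ⁅K⁆ FL K, IsGradedEndo K φ → ∀ x ∈ I, φ x ∈ I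

/-- `⟨S⟩_{T_ℤ}`, the smallest `T_ℤ`-ideal containing `S` (as a set of elements). -/
def TSpan (S : Set (FL K)) : Set (FL K) :=
  {x : FL K | ∀ I : LieIdeal K (FL K), IsTIdeal K I → S ⊆ (I : Set (FL K)) → x ∈ I}

/-- `T_ℤ(U_1)`, the set of ℤ-graded identities of `U_1`. -/
def TU1 : Set (FL K) :=
  {f : FL K | ∀ v : ℤ × ℕ → U1 K, (∀ (a : ℤ) (i : ℕ), v (a, i) ∈ U1comp K a) →
    FreeLieAlgebra.lift K v f = 0}

/-- The left-normed monomial `⁅x_{idx 0}^{a 0}, x_{idx 1}^{a 1}, …, x_{idx n}^{a n}⁆`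
in the free Lie algebra, on `n + 1` generators. -/
noncomputable def lnMonFin : ∀ n : ℕ, (Fin (n + 1) → ℤ) → (Fin (n + 1) → ℕ) → FL K
  | 0, a, idx => FreeLieAlgebra.of K (a 0, idx 0)
  | n + 1, a, idx =>
      ⁅lnMonFin n (fun k => a k.castSucc) (fun k => idx k.castSucc),
        FreeLieAlgebra.of K (a (Fin.last (n + 1)), idx (Fin.last (n + 1)))⁆

/-- Iterated Lie brackets of generators in which each generator `x_i^a` occurs
exactly `d (a, i)` times. -/
inductive IsMonOfMultiDeg : FL K → ((ℤ × ℕ) →₀ ℕ) → Prop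
  | gen (p : ℤ × ℕ) : IsMonOfMultiDeg (FreeLieAlgebra.of K p) (Finsupp.single p 1)
  | bracket {u v : FL K} {d e : (ℤ × ℕ) →₀ ℕ} :
      IsMonOfMultiDeg u d → IsMonOfMultiDeg v e → IsMonOfMultiDeg ⁅u, v⁆ (d + e)

/-- `f` is multihomogeneous of multidegree `d`. -/
def IsMultiHom (f : FL K) (d : (ℤ × ℕ) →₀ ℕ) : Prop :=
  f ∈ Submodule.span K {w : FL K | IsMonOfMultiDeg K w d}

/-!
Send every generator `x_i^a` to `e_a = t^{a+1} d/dt ∈ (U_1)_a`. Since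
`⁅e_a, e_b⁆ = (b - a) e_{a+b}`, the monomial `⁅x^{a_0}, …, x^{a_n}⁆` evaluates to
`∏_{k ≥ 1} (a_k - (a_0 + ⋯ + a_{k-1}))` times `e_{a_0 + ⋯ + a_n} ≠ 0`. For an identity this
integer vanishes in `K`, so in characteristic 2 some `a_k ≡ a_0 + ⋯ + a_{k-1} (mod 2)`.
The prefix `⁅x^{a_0}, …, x^{a_{k-1}}⁆` is homogeneous of degree `s = a_0 + ⋯ + a_{k-1}`, so
substituting it for `x_1^s` and `x_{i_k}^{a_k}` for `x_2^{a_k}` is a graded endomorphism; it sends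
`⁅x_1^s, x_2^{a_k}⁆ ∈ S` to the first `k + 1` letters of the monomial, which therefore lies in
every `T_ℤ`-ideal containing `S`, and so does the whole monomial.
-/

noncomputable def wittLinearMap (a : ℤ) : K[T;T⁻¹] →ₗ[K] K[T;T⁻¹] :=
  (AddMonoidAlgebra.basis ℤ K).constr K fun n => (n : K) • T (n + a)

lemma wittLinearMap_T (a n : ℤ) : wittLinearMap K a (T n) = (n : K) • T (n + a) :=
  (AddMonoidAlgebra.basis ℤ K).constr_basis K _ n

lemma wittLinearMap_T_mul_T (a n m : ℤ) :
    wittLinearMap K a (T n * T m) =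
      T n * wittLinearMap K a (T m) + T m * wittLinearMap K a (T n) := by
  simp only [← T_add, wittLinearMap_T, mul_smul_comm]
  rw [show n + (m + a) = n + m + a by ring, show m + (n + a) = n + m + a by ring, ← add_smul,
    Int.cast_add, add_comm (m : K)]

lemma wittLinearMap_mul (a : ℤ) (f g : K[T;T⁻¹]) :
    wittLinearMap K a (f * g) = f * wittLinearMap K a g + g * wittLinearMap K a f := by
  induction f using LaurentPolynomial.induction_on' with
  | add p q hp hq => simp only [add_mul, map_add, hp, hq]; ring
  | C_mul_T n c =>
    induction g using LaurentPolynomial.induction_on' with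
    | add p q hp hq => simp only [mul_add, map_add, hp, hq]; ring
    | C_mul_T m d =>
      rw [show C c * T n * (C d * T m) = C (c * d) * (T n * T m) by rw [map_mul]; ring,
        ← smul_eq_C_mul, map_smul, wittLinearMap_T_mul_T, ← smul_eq_C_mul c, ← smul_eq_C_mul d,
        map_smul, map_smul]
      simp only [smul_eq_C_mul, map_mul]
      ring

/-- The derivation `e_a = t^{a+1} d/dt`. -/
noncomputable def witt (a : ℤ) : U1 K :=
  Derivation.mk' (wittLinearMap K a) (by simpa only [smul_eq_mul] using wittLinearMap_mul K a)

lemma witt_T (a n : ℤ) : witt K a (T n) = (n : K) • T (n + a) := wittLinearMap_T K a n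

lemma witt_ne_zero (a : ℤ) : witt K a ≠ 0 := fun h => by
  simpa [witt_T, (isUnit_T _).ne_zero] using congr($h (T 1))

lemma witt_mem_U1comp (a : ℤ) : witt K a ∈ U1comp K a := by
  rw [U1comp, Submodule.mem_comap]
  convert Submodule.mem_span_singleton_self (R := K) (T (a + 1) : K[T;T⁻¹])
  simp [evalT, witt_T, add_comm]

lemma lie_witt (a b : ℤ) : ⁅witt K a, witt K b⁆ = ((b : K) - a) • witt K (a + b) := by
  refine Derivation.ext fun f => ?_
  induction f using LaurentPolynomial.induction_on' with
  | add p q hp hq => simp only [map_add, hp, hq]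
  | C_mul_T n c =>
    simp only [← smul_eq_C_mul, Derivation.commutator_apply, Derivation.smul_apply,
      Derivation.map_smul, witt_T, smul_smul, add_right_comm n b a, ← add_assoc, ← sub_smul]
    congr 1
    push_cast
    ring

def lnMonCoeff : ∀ n : ℕ, (Fin (n + 1) → ℤ) → ℤ
  | 0, _ => 1
  | n + 1, a => lnMonCoeff n (fun k => a k.castSucc) *
      (a (Fin.last (n + 1)) - ∑ k : Fin (n + 1), a k.castSucc)

lemma lift_witt_lnMonFin (n : ℕ) (a : Fin (n + 1) → ℤ) (idx : Fin (n + 1) → ℕ) :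
    lift K (fun p => witt K p.1) (lnMonFin K n a idx) =
      (lnMonCoeff n a : K) • witt K (∑ k, a k) := by
  induction n with
  | zero => simp [lnMonFin, lnMonCoeff]
  | succ n ih =>
    rw [lnMonFin, LieHom.map_lie, ih, lift_of_apply, smul_lie (L := U1 K) (M := U1 K), lie_witt,
      smul_smul, Fin.sum_univ_castSucc a, lnMonCoeff]
    push_cast
    rfl

lemma lnMonCoeff_cast_eq_zero_of_mem_TU1 (n : ℕ) (a : Fin (n + 1) → ℤ)
    (idx : Fin (n + 1) → ℕ) (hM : lnMonFin K n a idx ∈ TU1 K) : (lnMonCoeff n a : K) = 0 := by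
  have h := hM (fun p => witt K p.1) fun c _ => witt_mem_U1comp K c
  rw [lift_witt_lnMonFin, smul_eq_zero] at h
  exact h.resolve_right (witt_ne_zero K _)

lemma isHomBracket_lnMonFin (n : ℕ) (a : Fin (n + 1) → ℤ) (idx : Fin (n + 1) → ℕ) :
    IsHomBracket K (lnMonFin K n a idx) (∑ k, a k) := by
  induction n with
  | zero => simpa [lnMonFin] using IsHomBracket.gen (K := K) (a 0) (idx 0)
  | succ n ih =>
    rw [lnMonFin, Fin.sum_univ_castSucc a]
    exact (ih _ _).bracket (.gen _ _)

lemma of_mem_homComp (a : ℤ) (i : ℕ) : of K (a, i) ∈ homComp K a :=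
  Submodule.subset_span (IsHomBracket.gen a i)

lemma lie_mem_of_isTIdeal {I : LieIdeal K (FL K)} (hI : IsTIdeal K I) {s b : ℤ} {i j : ℕ}
    (hij : i ≠ j) (hsb : ⁅of K (s, i), of K (b, j)⁆ ∈ I) {u v : FL K}
    (hu : u ∈ homComp K s) (hv : v ∈ homComp K b) : ⁅u, v⁆ ∈ I := by
  set φ := lift K (Function.update (Function.update (of K) (s, i) u) (b, j) v)
  have hφ : IsGradedEndo K φ := by
    intro c k
    simp only [φ, lift_of_apply, Function.update_apply]
    split_ifs with h₁ h₂
    · obtain ⟨rfl, -⟩ := Prod.ext_iff.mp h₁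
      exact hv
    · obtain ⟨rfl, -⟩ := Prod.ext_iff.mp h₂
      exact hu
    · exact of_mem_homComp K c k
  have hφ_lie : φ ⁅of K (s, i), of K (b, j)⁆ = ⁅u, v⁆ := by
    simp [φ, Function.update_of_ne, hij]
  exact hφ_lie ▸ hI φ hφ _ hsb

lemma lnMonFin_mem_of_two_dvd {I : LieIdeal K (FL K)} (hI : IsTIdeal K I)
    (hS : ∀ s b : ℤ, s ≡ b [ZMOD 2] → ⁅of K (s, 1), of K (b, 2)⁆ ∈ I) {n : ℕ}
    (a : Fin (n + 1) → ℤ) (idx : Fin (n + 1) → ℕ) (h2 : 2 ∣ lnMonCoeff n a) :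
    lnMonFin K n a idx ∈ I := by
  induction n with
  | zero => norm_num [lnMonCoeff] at h2
  | succ n ih =>
    rw [lnMonFin]
    rcases Int.prime_two.dvd_mul.mp h2 with h_prefix | h_last
    · exact lie_mem_left K _ I _ _ (ih _ _ h_prefix)
    · exact lie_mem_of_isTIdeal K hI (by norm_num) (hS _ _ (Int.modEq_iff_dvd.mpr h_last))
        (Submodule.subset_span (isHomBracket_lnMonFin K n _ _)) (of_mem_homComp K _ _)

/-- Proposition 3.2: every left-normed graded monomial identity of `U_1` is a consequence
of the identities `⁅x_1^a, x_2^b⁆`, `a ≡ b (mod 2)`. -/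
theorem monomial_identity_mem_TSpan [CharP K 2] (n : ℕ)
    (a : Fin (n + 1) → ℤ) (idx : Fin (n + 1) → ℕ)
    (hM : lnMonFin K n a idx ∈ TU1 K) :
    lnMonFin K n a idx ∈ TSpan K {f : FL K | ∃ a b : ℤ, a ≡ b [ZMOD 2] ∧
      f = ⁅FreeLieAlgebra.of K (a, 1), FreeLieAlgebra.of K (b, 2)⁆} := by
  intro I hI hS
  refine lnMonFin_mem_of_two_dvd K hI (fun s b h => hS ⟨s, b, h, rfl⟩) a idx ?_
  exact (CharP.intCast_eq_zero_iff K 2 _).mp (lnMonCoeff_cast_eq_zero_of_mem_TU1 K n a idx hM)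
end

section
/- Let K be a field of characteristic 2 and let r, s ∈ ℤ with r ≤ s and r ≡ s (mod 2). Then ⁅x_1^r, x_2^s⁆ ∉ ⟨{⁅x_1^u, x_2^v⁆ : u, v ∈ ℤ, u ≤ v, u ≡ v (mod 2), (u, v) ≠ (r, s)}⟩_{T_ℤ}. (The graded identity ⁅x_1^r, x_2^s⁆ is not a consequence of the identities ⁅x_1^u, x_2^v⁆ with (u, v) ≠ (r, s).) -/
open FreeLieAlgebra LaurentPolynomial

variable (K : Type*) [Field K]

/-!
Send `x_1^r ↦ e`, `x_2^s ↦ f` and every other generator to `0` in the Heisenberg algebra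
`⟨e, f, z = ⁅e, f⁆⟩`, graded with `e`, `f`, `z` in degrees `r`, `s`, `r + s`. This map `ψ` is
graded, hence so is `ψ ∘ φ` for every graded endomorphism `φ`, and two homogeneous elements of
degrees `u ≤ v` can have a nonzero bracket in the target only if `(u, v) = (r, s)`. So the
elements killed by every `ψ ∘ φ` form a `T_ℤ`-ideal containing all the other identities
`⁅x_1^u, x_2^v⁆`, while `ψ ⁅x_1^r, x_2^s⁆ = z ≠ 0`.
-/

theorem Submodule.lie_mem_of_mem_span {R A : Type*} [CommRing R] [LieRing A] [LieAlgebra R A]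
    {s t : Set A} {P : Submodule R A} (h : ∀ x ∈ s, ∀ y ∈ t, ⁅x, y⁆ ∈ P) {p q : A}
    (hp : p ∈ Submodule.span R s) (hq : q ∈ Submodule.span R t) : ⁅p, q⁆ ∈ P := by
  induction hp, hq using Submodule.span_induction₂ with
  | mem_mem x y hx hy => exact h x hx y hy
  | zero_left => simp
  | zero_right => simp
  | add_left _ _ _ _ _ _ h₁ h₂ => rw [add_lie]; exact add_mem h₁ h₂
  | add_right _ _ _ _ _ _ h₁ h₂ => rw [lie_add]; exact add_mem h₁ h₂
  | smul_left c _ _ _ _ h => rw [smul_lie]; exact P.smul_mem c h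
  | smul_right c _ _ _ _ h => rw [lie_smul]; exact P.smul_mem c h

variable {K}

theorem lie_mem_homComp {a b : ℤ} {p q : FL K} (hp : p ∈ homComp K a) (hq : q ∈ homComp K b) :
    ⁅p, q⁆ ∈ homComp K (a + b) :=
  Submodule.lie_mem_of_mem_span
    (fun _ hx _ hy => Submodule.subset_span (IsHomBracket.bracket hx hy)) hp hq

theorem LieHom.map_mem_of_mem_homComp {A : Type*} [LieRing A] [LieAlgebra K A]
    {G : ℤ → Submodule K A} (hG : ∀ {u v : ℤ} {x y : A}, x ∈ G u → y ∈ G v → ⁅x, y⁆ ∈ G (u + v))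
    (ψ : FL K →ₗ⁅K⁆ A) (hψ : ∀ (a : ℤ) (i : ℕ), ψ (FreeLieAlgebra.of K (a, i)) ∈ G a)
    {a : ℤ} {p : FL K} (hp : p ∈ homComp K a) : ψ p ∈ G a := by
  induction hp using Submodule.span_induction with
  | mem w hw =>
    induction hw with
    | gen b i => exact hψ b i
    | bracket _ _ ihu ihv => rw [LieHom.map_lie]; exact hG ihu ihv
  | zero => simp
  | add x y _ _ ihx ihy => rw [map_add]; exact add_mem ihx ihy
  | smul c x _ ihx => rw [map_smul]; exact Submodule.smul_mem _ c ihx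

theorem IsGradedEndo.map_mem {φ : FL K →ₗ⁅K⁆ FL K} (hφ : IsGradedEndo K φ) {a : ℤ} {p : FL K}
    (hp : p ∈ homComp K a) : φ p ∈ homComp K a :=
  φ.map_mem_of_mem_homComp lie_mem_homComp hφ hp

theorem IsGradedEndo.comp {φ φ' : FL K →ₗ⁅K⁆ FL K} (hφ' : IsGradedEndo K φ')
    (hφ : IsGradedEndo K φ) : IsGradedEndo K (φ'.comp φ) :=
  fun a i => hφ'.map_mem (hφ a i)

variable (K) in
theorem isGradedEndo_id : IsGradedEndo K LieHom.id :=
  fun a i => Submodule.subset_span (IsHomBracket.gen a i)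

/-- The largest `T_ℤ`-ideal contained in the kernel of `ψ`. -/
def LieHom.gradedKer {A : Type*} [LieRing A] [LieAlgebra K A] (ψ : FL K →ₗ⁅K⁆ A) :
    LieIdeal K (FL K) where
  carrier := {y | ∀ φ : FL K →ₗ⁅K⁆ FL K, IsGradedEndo K φ → ψ (φ y) = 0}
  add_mem' hx hy φ hφ := by rw [map_add, map_add, hx φ hφ, hy φ hφ, add_zero]
  zero_mem' _ _ := by rw [map_zero, map_zero]
  smul_mem' c _ hx φ hφ := by rw [map_smul, map_smul, hx φ hφ, smul_zero]
  lie_mem hx φ hφ := by rw [LieHom.map_lie, LieHom.map_lie, hx φ hφ, lie_zero]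

theorem LieHom.isTIdeal_gradedKer {A : Type*} [LieRing A] [LieAlgebra K A]
    (ψ : FL K →ₗ⁅K⁆ A) : IsTIdeal K ψ.gradedKer :=
  fun φ hφ _ hy φ' hφ' => hy (φ'.comp φ) (hφ'.comp hφ)

theorem LieHom.map_eq_zero_of_mem_TSpan {A : Type*} [LieRing A] [LieAlgebra K A]
    (ψ : FL K →ₗ⁅K⁆ A) {S : Set (FL K)}
    (hS : ∀ f ∈ S, ∀ φ : FL K →ₗ⁅K⁆ FL K, IsGradedEndo K φ → ψ (φ f) = 0)
    {x : FL K} (hx : x ∈ TSpan K S) : ψ x = 0 :=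
  hx ψ.gradedKer ψ.isTIdeal_gradedKer hS LieHom.id (isGradedEndo_id K)

attribute [local instance 100] LieRing.ofAssociativeRing

section Heisenberg

local notation "M₃" => Matrix (Fin 3) (Fin 3) K

local notation "e" => (Matrix.single 0 1 1 : M₃)
local notation "f" => (Matrix.single 1 2 1 : M₃)
local notation "z" => (Matrix.single 0 2 1 : M₃)

variable (K) in
/-- The Heisenberg algebra of strictly upper triangular matrices, graded by putting `e`, `f` and
`z = ⁅e, f⁆` in degrees `r`, `s` and `r + s`. -/
def heisGens (r s a : ℤ) : Set M₃ :=
  {m | (a = r ∧ m = e) ∨ (a = s ∧ m = f) ∨ (a = r + s ∧ m = z)}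

variable (K) in
def heisGrading (r s a : ℤ) : Submodule K M₃ :=
  Submodule.span K (heisGens K r s a)

theorem lie_heisGens {r s u v : ℤ} {x y : M₃} (hx : x ∈ heisGens K r s u)
    (hy : y ∈ heisGens K r s v) :
    ⁅x, y⁆ = 0 ∨ (u = r ∧ v = s ∧ ⁅x, y⁆ = z) ∨ (u = s ∧ v = r ∧ ⁅x, y⁆ = -z) := by
  rcases hx with ⟨hu, rfl⟩ | ⟨hu, rfl⟩ | ⟨hu, rfl⟩ <;>
    rcases hy with ⟨hv, rfl⟩ | ⟨hv, rfl⟩ | ⟨hv, rfl⟩ <;>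
    simp [Ring.lie_def, hu, hv]

theorem lie_mem_heisGrading {r s u v : ℤ} {x y : M₃} (hx : x ∈ heisGrading K r s u)
    (hy : y ∈ heisGrading K r s v) : ⁅x, y⁆ ∈ heisGrading K r s (u + v) := by
  refine Submodule.lie_mem_of_mem_span (fun x hx y hy => ?_) hx hy
  rcases lie_heisGens hx hy with h | ⟨rfl, rfl, h⟩ | ⟨rfl, rfl, h⟩
  · rw [h]; exact zero_mem _
  · rw [h]; exact Submodule.subset_span (Or.inr (Or.inr ⟨rfl, rfl⟩))
  · rw [h]; exact neg_mem (Submodule.subset_span (Or.inr (Or.inr ⟨add_comm _ _, rfl⟩)))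

theorem lie_eq_zero_of_mem_heisGrading {r s u v : ℤ} (hrs : r ≤ s) (huv : u ≤ v)
    (hne : (u, v) ≠ (r, s)) {x y : M₃} (hx : x ∈ heisGrading K r s u)
    (hy : y ∈ heisGrading K r s v) : ⁅x, y⁆ = 0 := by
  rw [← Submodule.mem_bot K]
  refine Submodule.lie_mem_of_mem_span (fun x hx y hy => ?_) hx hy
  rcases lie_heisGens hx hy with h | ⟨rfl, rfl, -⟩ | ⟨rfl, rfl, -⟩
  · exact h
  · exact absurd rfl hne
  · exact absurd (by rw [le_antisymm hrs huv]) hne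

variable (K) in
noncomputable def heisSep (r s : ℤ) : FL K →ₗ⁅K⁆ M₃ :=
  FreeLieAlgebra.lift K fun g => if g = (r, 1) then e else if g = (s, 2) then f else 0

theorem heisSep_of_left {r s : ℤ} : heisSep K r s (FreeLieAlgebra.of K (r, 1)) = e := by
  rw [heisSep, FreeLieAlgebra.lift_of_apply, if_pos rfl]

theorem heisSep_of_right {r s : ℤ} : heisSep K r s (FreeLieAlgebra.of K (s, 2)) = f := by
  rw [heisSep, FreeLieAlgebra.lift_of_apply, if_neg (by simp), if_pos rfl]

theorem heisSep_mem_heisGrading {r s a : ℤ} {p : FL K} (hp : p ∈ homComp K a) :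
    heisSep K r s p ∈ heisGrading K r s a := by
  refine (heisSep K r s).map_mem_of_mem_homComp lie_mem_heisGrading (fun b i => ?_) hp
  rw [heisSep, FreeLieAlgebra.lift_of_apply]
  split_ifs with h₁ h₂
  · exact Submodule.subset_span (Or.inl ⟨(Prod.ext_iff.1 h₁).1, rfl⟩)
  · exact Submodule.subset_span (Or.inr (Or.inl ⟨(Prod.ext_iff.1 h₂).1, rfl⟩))
  · exact zero_mem _

theorem heisSep_lie_of_of {r s : ℤ} :
    heisSep K r s ⁅FreeLieAlgebra.of K (r, 1), FreeLieAlgebra.of K (s, 2)⁆ ≠ 0 := by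
  rw [LieHom.map_lie, heisSep_of_left, heisSep_of_right]
  intro h
  simpa [Ring.lie_def] using congrFun₂ h 0 2

end Heisenberg

theorem frs_not_consequence_general (r s : ℤ) (hrs : r ≤ s) :
    ⁅FreeLieAlgebra.of K (r, 1), FreeLieAlgebra.of K (s, 2)⁆ ∉
      TSpan K {f : FL K | ∃ u v : ℤ, u ≤ v ∧ u ≡ v [ZMOD 2] ∧ (u, v) ≠ (r, s) ∧
        f = ⁅FreeLieAlgebra.of K (u, 1), FreeLieAlgebra.of K (v, 2)⁆} := by
  refine fun hmem => heisSep_lie_of_of ((heisSep K r s).map_eq_zero_of_mem_TSpan ?_ hmem)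
  rintro _ ⟨u, v, huv, -, hne, rfl⟩ φ hφ
  rw [LieHom.map_lie, LieHom.map_lie]
  exact lie_eq_zero_of_mem_heisGrading hrs huv hne (heisSep_mem_heisGrading (hφ u 1))
    (heisSep_mem_heisGrading (hφ v 2))

/-- Lemma 4.1: `⁅x_1^r, x_2^s⁆` is not a consequence of the identities `⁅x_1^u, x_2^v⁆`
with `u ≤ v`, `u ≡ v (mod 2)`, `(u, v) ≠ (r, s)`. -/
theorem frs_not_consequence [CharP K 2] (r s : ℤ) (hrs : r ≤ s) (hmod : r ≡ s [ZMOD 2]) :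
    ⁅FreeLieAlgebra.of K (r, 1), FreeLieAlgebra.of K (s, 2)⁆ ∉
      TSpan K {f : FL K | ∃ u v : ℤ, u ≤ v ∧ u ≡ v [ZMOD 2] ∧ (u, v) ≠ (r, s) ∧
        f = ⁅FreeLieAlgebra.of K (u, 1), FreeLieAlgebra.of K (v, 2)⁆} :=
  frs_not_consequence_general r s hrs
end

section
/- Let K be a field of characteristic 2 and let d ∈ ℤ. Then x_1^d ∉ ⟨{⁅x_1^a, x_2^b⁆ : a, b ∈ ℤ, a ≡ b (mod 2)} ∪ {x_1^c : c ∈ ℤ, c ≠ d}⟩_{T_ℤ}. (The graded identity x^d is not a consequence of the identities ⁅x_1^a, x_2^b⁆ with a ≡ b (mod 2) together with all x^c with c ≠ d.) -/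
open FreeLieAlgebra LaurentPolynomial

variable (K : Type*) [Field K]

/-! ### Auxiliary material for the proof -/

attribute [local instance 100] LieRing.ofAssociativeRing

/-- The bracket on the commutative algebra `LaurentPolynomial K` vanishes. -/
lemma laurent_bracket_zero (x y : LaurentPolynomial K) : ⁅x, y⁆ = 0 := by
  rw [LieRing.of_associative_ring_bracket, mul_comm, sub_self]

/-- The witness Lie algebra morphism: abelianization followed by projection onto degree `d`. -/
noncomputable def prHom (d : ℤ) : FL K →ₗ⁅K⁆ LaurentPolynomial K :=
  FreeLieAlgebra.lift K (fun p => if p.1 = d then T (p.2 : ℤ) else 0)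

lemma prHom_of (d a : ℤ) (i : ℕ) :
    prHom K d (FreeLieAlgebra.of K (a, i)) = if a = d then T (i : ℤ) else 0 := by
  simp [prHom, lift_of_apply]

/-- `prHom` kills every homogeneous bracket of degree `≠ d`. -/
lemma prHom_isHomBracket (d : ℤ) {w : FL K} {a : ℤ} (h : IsHomBracket K w a) (hne : a ≠ d) :
    prHom K d w = 0 := by
  induction h with
  | gen a i => rw [prHom_of, if_neg hne]
  | bracket hu hv _ _ => rw [LieHom.map_lie, laurent_bracket_zero]

lemma prHom_homComp (d a : ℤ) (hne : a ≠ d) {w : FL K} (hw : w ∈ homComp K a) :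
    prHom K d w = 0 := by
  induction hw using Submodule.span_induction with
  | mem w hw => exact prHom_isHomBracket K d hw hne
  | zero => exact (prHom K d).map_zero
  | add x y _ _ hx hy => rw [map_add, hx, hy, add_zero]
  | smul c x _ hx => rw [map_smul, hx, smul_zero]

/-- The kernel of `prHom` is a `T_ℤ`-ideal. -/
lemma isTIdeal_ker (d : ℤ) : IsTIdeal K (prHom K d).ker := by
  intro φ hφ x hx
  rw [LieHom.mem_ker] at hx ⊢
  -- the linear map transporting `prHom` through `φ`
  set v : ℕ → LaurentPolynomial K := fun i => prHom K d (φ (FreeLieAlgebra.of K (d, i))) with hv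
  set Tlin : LaurentPolynomial K →ₗ[K] LaurentPolynomial K :=
    Finsupp.lsum K (fun n : ℤ => LinearMap.toSpanSingleton K (LaurentPolynomial K) (v n.toNat)) ∘ₗ
      (AddMonoidAlgebra.coeffLinearEquiv K).toLinearMap
    with hT
  have hTlie : ∀ x y : LaurentPolynomial K, Tlin ⁅x, y⁆ = ⁅Tlin x, Tlin y⁆ := by
    intro x y
    rw [laurent_bracket_zero, laurent_bracket_zero, Tlin.map_zero]
  set TL : LaurentPolynomial K →ₗ⁅K⁆ LaurentPolynomial K :=
    { Tlin with map_lie' := hTlie _ _ } with hTL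
  have key : (prHom K d).comp φ = TL.comp (prHom K d) := by
    apply FreeLieAlgebra.hom_ext
    rintro ⟨a, i⟩
    simp only [LieHom.comp_apply]
    rw [prHom_of]
    by_cases ha : a = d
    · subst ha
      have : TL (T (i : ℤ)) = v i := by
        show Tlin (T (i : ℤ)) = v i
        rw [hT]
        show (Finsupp.lsum K fun n : ℤ =>
          LinearMap.toSpanSingleton K (LaurentPolynomial K) (v n.toNat))
            ((AddMonoidAlgebra.coeffLinearEquiv K) (T (i : ℤ))) = v i
        rw [show (AddMonoidAlgebra.coeffLinearEquiv K) (T (i : ℤ)) = Finsupp.single (i : ℤ) (1 : K) from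
          rfl]
        rw [Finsupp.lsum_single]
        simp [LinearMap.toSpanSingleton_apply]
      rw [if_pos rfl, this, hv]
    · rw [if_neg ha, map_zero]
      exact prHom_homComp K d a ha (hφ a i)
  have := congrArg (fun f => f x) key
  simp only [LieHom.comp_apply] at this
  rw [this, hx, map_zero]

/-- Lemma 4.4: the graded identity `x^d` is not a consequence of the same-parity bracket
identities together with the identities `x^c`, `c ≠ d`. -/
theorem xd_not_consequence [CharP K 2] (d : ℤ) :
    FreeLieAlgebra.of K (d, 1) ∉ TSpan K
      ({f : FL K | ∃ a b : ℤ, a ≡ b [ZMOD 2] ∧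
          f = ⁅FreeLieAlgebra.of K (a, 1), FreeLieAlgebra.of K (b, 2)⁆} ∪
       {f : FL K | ∃ c : ℤ, c ≠ d ∧ f = FreeLieAlgebra.of K (c, 1)}) := by
  intro h
  have hmem : FreeLieAlgebra.of K (d, 1) ∈ (prHom K d).ker := by
    apply h _ (isTIdeal_ker K d)
    rintro f (⟨a, b, hab, rfl⟩ | ⟨c, hc, rfl⟩)
    · rw [SetLike.mem_coe, LieHom.mem_ker, LieHom.map_lie, laurent_bracket_zero]
    · rw [SetLike.mem_coe, LieHom.mem_ker, prHom_of, if_neg hc]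
  rw [LieHom.mem_ker, prHom_of, if_pos rfl] at hmem
  exact (fun h' => one_ne_zero (α := K) (AddMonoidAlgebra.single_eq_zero.mp h')) hmem
end

section
/- Let K be a field of characteristic 2 and let a, b ∈ ℕ with a ≡ b (mod 2). If D_a and D_b are K-linear derivations of the polynomial ring Polynomial K with D_a X = X^a and D_b X = X^b, then ⁅D_a, D_b⁆ = 0. (The graded identities ⁅x_1^{a−1}, x_2^{b−1}⁆ with a − 1 ≡ b − 1 (mod 2) hold in the Witt algebra W_1 in characteristic 2.) -/
variable (K : Type*) [Field K]

/-- In characteristic two, `⁅e_{a-1}, e_{b-1}⁆ = 0` in the Witt algebra `W_1` whenever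
`a ≡ b (mod 2)`, where `e_{a-1}` is the derivation of `K[t]` with `e_{a-1} X = X^a`. -/
theorem witt_bracket_eq_zero_char_two [CharP K 2] (a b : ℕ) (hab : a ≡ b [MOD 2])
    (Da Db : Derivation K (Polynomial K) (Polynomial K))
    (ha : Da Polynomial.X = Polynomial.X ^ a) (hb : Db Polynomial.X = Polynomial.X ^ b) :
    ⁅Da, Db⁆ = 0 := by
  apply Polynomial.derivation_ext
  rw [Derivation.commutator_apply, ha, hb, Derivation.leibniz_pow, Derivation.leibniz_pow,
    ha, hb, Derivation.coe_zero, Pi.zero_apply]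
  have hcast : ((a : Polynomial K) = (b : Polynomial K)) :=
    (CharP.natCast_eq_natCast (Polynomial K) 2).mpr hab
  have hab' : a % 2 = b % 2 := hab
  rcases Nat.even_or_odd a with hea | hoa
  · have heb : Even b := by rw [Nat.even_iff] at hea ⊢; omega
    have haz : (a : Polynomial K) = 0 :=
      (CharP.cast_eq_zero_iff (Polynomial K) 2 a).mpr hea.two_dvd
    have hbz : (b : Polynomial K) = 0 :=
      (CharP.cast_eq_zero_iff (Polynomial K) 2 b).mpr heb.two_dvd
    simp only [nsmul_eq_mul, smul_eq_mul, haz, hbz]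
    ring
  · have hob : Odd b := by rw [Nat.odd_iff] at hoa ⊢; omega
    have ha1 : 1 ≤ a := hoa.pos
    have hb1 : 1 ≤ b := hob.pos
    simp only [nsmul_eq_mul, smul_eq_mul]
    rw [← pow_add, ← pow_add, show b - 1 + a = a - 1 + b by omega, hcast]
    ring
end
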